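/- arXiv:2302.07049 — 6 statements merged into one kernel-verified Lean document; each statement's English description precedes it below -/
import Mathlib

section
/- Let {a_k} be a non-negative real sequence, ξ > 0, and define b_k = Σ_{t=0}^k a_t. Then for every i ≥ 0, Σ_{k=0}^i a_k / (ξ + b_k) ≤ log((ξ + b_i)/ξ). -/
lemma key_log (x y : ℝ) (hx : 0 < x) (hxy : x ≤ y) :
    (y - x) / y ≤ Real.log y - Real.log x := by
  have hy : 0 < y := lt_of_lt_of_le hx hxy
  have h1 : Real.log (x / y) ≤ x / y - 1 :=
    Real.log_le_sub_one_of_pos (div_pos hx hy)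
  rw [Real.log_div (ne_of_gt hx) (ne_of_gt hy)] at h1
  have : 1 - x / y ≤ Real.log y - Real.log x := by linarith
  calc (y - x) / y = 1 - x / y := by field_simp
    _ ≤ _ := this

theorem stmt_1 (a : ℕ → ℝ) (ha : ∀ k, 0 ≤ a k) (ξ : ℝ) (hξ : 0 < ξ)
    (b : ℕ → ℝ) (hb : ∀ k, b k = ∑ t ∈ Finset.range (k + 1), a t) (i : ℕ) :
    ∑ k ∈ Finset.range (i + 1), a k / (ξ + b k) ≤ Real.log ((ξ + b i) / ξ) := by
  have hbnn : ∀ k, 0 ≤ b k := by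
    intro k; rw [hb k]; exact Finset.sum_nonneg fun t _ => ha t
  have hpos : ∀ k, 0 < ξ + b k := fun k => by linarith [hbnn k]
  induction i with
  | zero =>
      have hb0 : b 0 = a 0 := by rw [hb 0]; simp
      have := key_log ξ (ξ + b 0) hξ (by linarith [hbnn 0])
      rw [Real.log_div (ne_of_gt (hpos 0)) (ne_of_gt hξ)]
      simpa [hb0] using this
  | succ n ih =>
      rw [Finset.sum_range_succ]
      have hstep : b (n+1) = b n + a (n+1) := by
        rw [hb (n+1), hb n, Finset.sum_range_succ]
      have hk := key_log (ξ + b n) (ξ + b (n+1)) (hpos n)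
        (by rw [hstep]; linarith [ha (n+1)])
      have hk' : a (n+1) / (ξ + b (n+1)) ≤
          Real.log (ξ + b (n+1)) - Real.log (ξ + b n) := by
        have : (ξ + b (n+1)) - (ξ + b n) = a (n+1) := by rw [hstep]; ring
        rwa [this] at hk
      rw [Real.log_div (ne_of_gt (hpos (n+1))) (ne_of_gt hξ)]
      rw [Real.log_div (ne_of_gt (hpos n)) (ne_of_gt hξ)] at ih
      linarith
end

section
/- Let g ∈ ℝ^n be nonzero, B ∈ ℝ^{n×n} symmetric with ‖B‖ ≤ κ_B where κ_B ≥ 1, and let w ∈ ℝ^n with w_j ≥ ς_j for constants ς_j ∈ (0,1]. Define Δ_j = |g_j|/w_j, s^L_j = −sign(g_j) Δ_j, and s^Q = γ s^L where γ = min(1, |gᵀ s^L| / ((s^L)ᵀ B s^L)) if (s^L)ᵀ B s^L > 0 and γ = 1 otherwise. Then gᵀ s^Q + (1/2)(s^Q)ᵀ B s^Q ≤ −(ς_min / (2κ_B)) Σ_{j=1}^n g_j² / w_j, where ς_min = min_j ς_j. -/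
open InnerProductSpace

theorem stmt_4 {n : ℕ} (κB : ℝ) (hκB : 1 ≤ κB)
    (B : EuclideanSpace ℝ (Fin n) →L[ℝ] EuclideanSpace ℝ (Fin n))
    (hBsym : ∀ x y : EuclideanSpace ℝ (Fin n), ⟪B x, y⟫_ℝ = ⟪x, B y⟫_ℝ)
    (hBnorm : ‖B‖ ≤ κB)
    (g : EuclideanSpace ℝ (Fin n)) (hg : g ≠ 0)
    (ς w : Fin n → ℝ) (hς : ∀ j, ς j ∈ Set.Ioc (0 : ℝ) 1) (hw : ∀ j, ς j ≤ w j)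
    (ςmin : ℝ) (hςmin : IsLeast (Set.range ς) ςmin)
    (Δ : Fin n → ℝ) (hΔ : ∀ j, Δ j = |g j| / w j)
    (sL : EuclideanSpace ℝ (Fin n)) (hsL : ∀ j, sL j = -Real.sign (g j) * Δ j)
    (γ : ℝ)
    (hγ : γ = if 0 < ⟪sL, B sL⟫_ℝ then min 1 (|⟪g, sL⟫_ℝ| / ⟪sL, B sL⟫_ℝ) else 1)
    (sQ : EuclideanSpace ℝ (Fin n)) (hsQ : sQ = γ • sL) :
    ⟪g, sQ⟫_ℝ + (1 / 2) * ⟪sQ, B sQ⟫_ℝ ≤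
      -(ςmin / (2 * κB)) * ∑ j, (g j) ^ 2 / w j := by
  set S : ℝ := ∑ j, (g j) ^ 2 / w j with hS
  have hw' : ∀ j, 0 < w j := fun j => lt_of_lt_of_le (hς j).1 (hw j)
  obtain ⟨j0, hj0⟩ := hςmin.1
  have hςpos : 0 < ςmin := hj0 ▸ (hς j0).1
  have hςle1 : ςmin ≤ 1 := hj0 ▸ (hς j0).2
  have hκpos : 0 < κB := lt_of_lt_of_le one_pos hκB
  have hsign : ∀ x : ℝ, Real.sign x * |x| = x := by
    intro x
    rcases lt_trichotomy x 0 with h | h | h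
    · rw [Real.sign_of_neg h, abs_of_neg h]; ring
    · simp [h]
    · rw [Real.sign_of_pos h, abs_of_pos h]; ring
  -- sL j = -(g j / w j)
  have hsL' : ∀ j, sL j = -(g j / w j) := by
    intro j
    rw [hsL j, hΔ j]
    have h1 : -Real.sign (g j) * (|g j| / w j) = -((Real.sign (g j) * |g j|) / w j) := by
      ring
    rw [h1, hsign (g j)]
  -- S positive
  have hSpos : 0 < S := by
    have hex : ∃ j, g j ≠ 0 := by
      by_contra h
      push_neg at h
      apply hg
      ext j
      exact h j
    obtain ⟨j1, hj1⟩ := hex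
    apply Finset.sum_pos'
    · intro j _
      exact div_nonneg (sq_nonneg _) (hw' j).le
    · exact ⟨j1, Finset.mem_univ j1, div_pos (by positivity) (hw' j1)⟩
  -- inner g sL = -S
  have ha : ⟪g, sL⟫_ℝ = -S := by
    simp only [PiLp.inner_apply, RCLike.inner_apply, conj_trivial, hS]
    rw [← Finset.sum_neg_distrib]
    apply Finset.sum_congr rfl
    intro j _
    rw [hsL' j]
    field_simp
  -- norm sq of sL
  have hnorm : ‖sL‖ ^ 2 = ∑ j, (g j / w j) ^ 2 := by
    rw [← real_inner_self_eq_norm_sq]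
    simp only [PiLp.inner_apply, RCLike.inner_apply, conj_trivial]
    apply Finset.sum_congr rfl
    intro j _
    rw [hsL' j]; ring
  -- key: ςmin * ‖sL‖² ≤ S
  have hkey : ςmin * ‖sL‖ ^ 2 ≤ S := by
    rw [hnorm, Finset.mul_sum]
    apply Finset.sum_le_sum
    intro j _
    have hwj := hw' j
    have h1 : g j ^ 2 / w j = w j * (g j / w j) ^ 2 := by
      field_simp
    rw [h1]
    have h2 : ςmin ≤ w j := le_trans (hςmin.2 ⟨j, rfl⟩) (hw j)
    nlinarith [sq_nonneg (g j / w j)]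
  set b : ℝ := ⟪sL, B sL⟫_ℝ with hb
  have hbbound : b ≤ κB * ‖sL‖ ^ 2 := by
    have h1 : b ≤ ‖sL‖ * ‖B sL‖ := real_inner_le_norm sL (B sL)
    have h2 : ‖B sL‖ ≤ ‖B‖ * ‖sL‖ := B.le_opNorm sL
    nlinarith [norm_nonneg sL, norm_nonneg (B sL), norm_nonneg B]
  have hbS : ςmin * b ≤ κB * S := by
    nlinarith [norm_nonneg sL]
  -- rewrite goal
  have hginner : ⟪g, sQ⟫_ℝ = γ * (-S) := by
    rw [hsQ, real_inner_smul_right, ha]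
  have hqq : ⟪sQ, B sQ⟫_ℝ = γ ^ 2 * b := by
    rw [hsQ, map_smul, real_inner_smul_left, real_inner_smul_right, hb]
    ring
  rw [hginner, hqq]
  clear_value S b
  clear hqq hginner hsQ hb hbbound hkey hnorm hsign hΔ hsL hBsym hBnorm hg hςmin hj0 hw hς hS
  have hfrac : ςmin / (2 * κB) ≤ 1 / 2 := by
    rw [div_le_div_iff₀ (by linarith) (by norm_num)]
    nlinarith
  by_cases hbp : 0 < b
  · rw [if_pos hbp] at hγ
    rw [ha, abs_neg, abs_of_pos hSpos] at hγ
    rcases le_total (S / b) 1 with hc | hc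
    · rw [hγ, min_eq_right hc]
      have heq : S / b * (-S) + 1 / 2 * ((S / b) ^ 2 * b) = -(S ^ 2 / (2 * b)) := by
        field_simp
        ring
      rw [heq]
      have : -(ςmin / (2 * κB)) * S = -((ςmin * S) / (2 * κB)) := by ring
      rw [this, neg_le_neg_iff, div_le_div_iff₀ (by linarith) (by linarith)]
      nlinarith
    · rw [hγ, min_eq_left hc]
      have hbleS : b ≤ S := by
        rw [le_div_iff₀ hbp] at hc
        linarith
      have := mul_le_mul_of_nonneg_right hfrac hSpos.le
      nlinarith
  · rw [if_neg hbp] at hγ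
    push_neg at hbp
    rw [hγ]
    have := mul_le_mul_of_nonneg_right hfrac hSpos.le
    nlinarith
end

section
/- Let {g_k}_{k≥0} be a sequence in ℝ^n, ς > 0, and μ ∈ (0, 1/2). With w_{k,j} = (ς + Σ_{t=0}^k g_{t,j}²)^μ, for every i ≥ 0 and every j, Σ_{k=0}^i g_{k,j}² / w_{k,j}² ≤ (1/(1−2μ)) (ς + Σ_{k=0}^i g_{k,j}²)^{1−2μ}. -/
/-! With partial sums `S_k = ξ + a_0 + ⋯ + a_k`, concavity of `x ↦ x ^ (1 - β)` bounds each
summand `a_k / S_k ^ β` by `(S_k ^ (1 - β) - S_(k-1) ^ (1 - β)) / (1 - β)`, and these increments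
telescope. -/

open Real Finset

theorem sub_div_rpow_le_rpow_sub_rpow_div {b c β : ℝ} (hb : 0 ≤ b) (hc : 0 < c)
    (hβ0 : 0 ≤ β) (hβ1 : β < 1) :
    (c - b) / c ^ β ≤ (c ^ (1 - β) - b ^ (1 - β)) / (1 - β) := by
  set p := 1 - β with hp
  have hp0 : 0 < p := by linarith
  have hx : 0 < c ^ p := rpow_pos_of_pos hc p
  -- Bernoulli's inequality, i.e. the tangent line of the concave `x ↦ x ^ p` at `c`
  have bernoulli : b ^ p ≤ c ^ p * (1 + p * (b / c - 1)) := by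
    have h := rpow_one_add_le_one_add_mul_self (s := b / c - 1)
      (by linarith [div_nonneg hb hc.le]) hp0.le (by linarith)
    rwa [add_sub_cancel, div_rpow hb hc.le, div_le_iff₀ hx, mul_comm] at h
  have hcβ : c ^ β = c / c ^ p := by
    rw [hp, rpow_sub hc, rpow_one, div_div_cancel₀ hc.ne']
  rw [hcβ, div_div_eq_mul_div, le_div_iff₀ hp0, div_mul_eq_mul_div, div_le_iff₀ hc]
  have hexpand : c * (c ^ p * (1 + p * (b / c - 1))) = c ^ p * (c - p * (c - b)) := by
    field_simp; ring
  nlinarith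

theorem sum_div_rpow_partialSum_le {a : ℕ → ℝ} (ha : ∀ k, 0 ≤ a k) {ξ β : ℝ} (hξ : 0 < ξ)
    (hβ0 : 0 ≤ β) (hβ1 : β < 1) (m : ℕ) :
    ∑ k ∈ range m, a k / (ξ + ∑ t ∈ range (k + 1), a t) ^ β ≤
      ((ξ + ∑ t ∈ range m, a t) ^ (1 - β) - ξ ^ (1 - β)) / (1 - β) := by
  induction m with
  | zero => simp
  | succ m ih =>
    have hS : ∀ k, 0 ≤ ∑ t ∈ range k, a t := fun k => sum_nonneg fun t _ => ha t
    have step := sub_div_rpow_le_rpow_sub_rpow_div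
      (b := ξ + ∑ t ∈ range m, a t) (c := ξ + ∑ t ∈ range (m + 1), a t)
      (by linarith [hS m]) (by linarith [hS (m + 1)]) hβ0 hβ1
    have hdiff : (ξ + ∑ t ∈ range (m + 1), a t) - (ξ + ∑ t ∈ range m, a t) = a m := by
      rw [sum_range_succ]; ring
    rw [hdiff] at step
    rw [sum_range_succ]
    calc _ ≤ _ := add_le_add ih step
      _ = _ := by ring

theorem stmt_10 {n : ℕ} (g : ℕ → Fin n → ℝ) (ς μ : ℝ) (hς : 0 < ς)
    (hμ : μ ∈ Set.Ioo (0 : ℝ) (1 / 2))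
    (w : ℕ → Fin n → ℝ)
    (hw : ∀ k j, w k j = (ς + ∑ t ∈ Finset.range (k + 1), (g t j) ^ 2) ^ μ)
    (i : ℕ) (j : Fin n) :
    ∑ k ∈ Finset.range (i + 1), (g k j) ^ 2 / (w k j) ^ 2 ≤
      (1 / (1 - 2 * μ)) * (ς + ∑ k ∈ Finset.range (i + 1), (g k j) ^ 2) ^ (1 - 2 * μ) := by
  obtain ⟨hμ0, hμ1⟩ := hμ
  have hw_sq : ∀ k, w k j ^ 2 = (ς + ∑ t ∈ range (k + 1), g t j ^ 2) ^ (2 * μ) := fun k => by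
    rw [hw, ← rpow_natCast, ← rpow_mul (by positivity), mul_comm]
    norm_num
  simp_rw [hw_sq]
  calc _ ≤ _ := sum_div_rpow_partialSum_le (fun k => sq_nonneg (g k j)) hς (by linarith)
        (by linarith) (i + 1)
    _ ≤ _ := by
      rw [one_div_mul_eq_div]
      gcongr
      · linarith
      · exact sub_le_self _ (by positivity)
end

section
/- Let {g_k}_{k≥0} be a sequence in ℝ^n, ς > 0, and μ ∈ (1/2, 1). With w_{k,j} = (ς + Σ_{t=0}^k g_{t,j}²)^μ, for every i ≥ 0 and every j, Σ_{k=0}^i g_{k,j}² / w_{k,j}² ≤ ς^{1−2μ}/(2μ−1). -/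
lemma key_step (α a b : ℝ) (hα : 1 < α) (ha : 0 < a) (hab : a ≤ b) :
    (b - a) / b ^ α ≤ (a ^ (1 - α) - b ^ (1 - α)) / (α - 1) := by
  have hb : 0 < b := ha.trans_le hab
  rw [div_le_div_iff₀ (by positivity) (by linarith)]
  have ht1 : (1:ℝ) ≤ b / a := (one_le_div ha).2 hab
  have hbern : 1 + α * (b / a - 1) ≤ (b / a) ^ α := by
    have := one_add_mul_self_le_rpow_one_add (s := b / a - 1) (by linarith) hα.le
    simpa using this
  have hdiv : (b / a) ^ α = b ^ α * a ^ (-α) := by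
    rw [Real.div_rpow hb.le ha.le, div_eq_mul_inv, ← Real.rpow_neg ha.le]
  have hsub : a ^ (1 - α) = a * a ^ (-α) := by
    rw [sub_eq_add_neg, Real.rpow_add ha, Real.rpow_one]
  have hsub2 : b ^ (1 - α) = b * b ^ (-α) := by
    rw [sub_eq_add_neg, Real.rpow_add hb, Real.rpow_one]
  have hbb : b ^ (-α) * b ^ α = 1 := by
    rw [← Real.rpow_add hb]; simp
  have hamul : a ^ (-α) > 0 := Real.rpow_pos_of_pos ha _
  have hbmul : b ^ (α) > 0 := Real.rpow_pos_of_pos hb _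
  -- goal: (b - a) * (α - 1) ≤ (a ^ (1-α) - b ^ (1-α)) * b ^ α
  rw [hsub, hsub2]
  have key : a * (1 + α * (b / a - 1)) ≤ a * (b / a) ^ α :=
    mul_le_mul_of_nonneg_left hbern ha.le
  have hba : a * (b / a) = b := by field_simp
  nlinarith [mul_le_mul_of_nonneg_right key hbmul.le,
    mul_pos ha hamul]

theorem stmt_11 {n : ℕ} (g : ℕ → Fin n → ℝ) (ς μ : ℝ) (hς : 0 < ς)
    (hμ : μ ∈ Set.Ioo (1 / 2 : ℝ) 1)
    (w : ℕ → Fin n → ℝ)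
    (hw : ∀ k j, w k j = (ς + ∑ t ∈ Finset.range (k + 1), (g t j) ^ 2) ^ μ)
    (i : ℕ) (j : Fin n) :
    ∑ k ∈ Finset.range (i + 1), (g k j) ^ 2 / (w k j) ^ 2 ≤
      ς ^ (1 - 2 * μ) / (2 * μ - 1) := by
  obtain ⟨hμ1, hμ2⟩ := hμ
  have hα : 1 < 2 * μ := by linarith
  set S : ℕ → ℝ := fun k => ς + ∑ t ∈ Finset.range (k + 1), (g t j) ^ 2 with hS
  have hSpos : ∀ k, 0 < S k := by
    intro k
    have : 0 ≤ ∑ t ∈ Finset.range (k + 1), (g t j) ^ 2 :=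
      Finset.sum_nonneg fun t _ => sq_nonneg _
    simp only [hS]; linarith
  have hw2 : ∀ k, (w k j) ^ 2 = S k ^ (2 * μ) := by
    intro k
    rw [hw, sq, ← Real.rpow_add (hSpos k)]
    ring_nf
  have main : ∀ i, ∑ k ∈ Finset.range (i + 1), (g k j) ^ 2 / (w k j) ^ 2 ≤
      (ς ^ (1 - 2 * μ) - S i ^ (1 - 2 * μ)) / (2 * μ - 1) := by
    intro i
    induction i with
    | zero =>
      rw [Finset.sum_range_one, hw2]
      have h0 : S 0 = ς + (g 0 j) ^ 2 := by simp [hS]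
      have := key_step (2 * μ) ς (S 0) hα hς (by nlinarith [sq_nonneg (g 0 j)])
      calc (g 0 j) ^ 2 / S 0 ^ (2 * μ) = (S 0 - ς) / S 0 ^ (2 * μ) := by rw [h0]; ring_nf
        _ ≤ _ := this
    | succ m ih =>
      rw [Finset.sum_range_succ]
      have hstep : S m ≤ S (m + 1) := by
        simp only [hS]
        have : ∑ t ∈ Finset.range (m + 1 + 1), (g t j) ^ 2
            = ∑ t ∈ Finset.range (m + 1), (g t j) ^ 2 + (g (m+1) j) ^ 2 :=
          Finset.sum_range_succ _ _
        nlinarith [sq_nonneg (g (m+1) j)]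
      have hdiff : S (m + 1) - S m = (g (m+1) j) ^ 2 := by
        simp only [hS]
        rw [Finset.sum_range_succ _ (m+1)]
        ring
      have := key_step (2 * μ) (S m) (S (m+1)) hα (hSpos m) hstep
      rw [hw2, ← hdiff]
      have : (S (m+1) - S m) / S (m+1) ^ (2 * μ) ≤
          (S m ^ (1 - 2*μ) - S (m+1) ^ (1 - 2*μ)) / (2 * μ - 1) := this
      have hcomb := add_le_add ih this
      calc ∑ k ∈ Finset.range (m + 1), (g k j) ^ 2 / (w k j) ^ 2
            + (S (m+1) - S m) / S (m+1) ^ (2 * μ) ≤ _ := hcomb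
        _ = (ς ^ (1 - 2 * μ) - S (m+1) ^ (1 - 2 * μ)) / (2 * μ - 1) := by ring
  calc ∑ k ∈ Finset.range (i + 1), (g k j) ^ 2 / (w k j) ^ 2
      ≤ (ς ^ (1 - 2 * μ) - S i ^ (1 - 2 * μ)) / (2 * μ - 1) := main i
    _ ≤ ς ^ (1 - 2 * μ) / (2 * μ - 1) := by
        have : 0 ≤ S i ^ (1 - 2 * μ) := (Real.rpow_pos_of_pos (hSpos i) _).le
        apply div_le_div_of_nonneg_right ?_ (by linarith)
        · linarith
end

section
/- Let {g_k}_{k≥0} be a sequence in ℝ^n and ς > 0. With AdaGrad weights w_{k,j} = (ς + Σ_{t=0}^k g_{t,j}²)^{1/2}, for every i ≥ 0, Σ_{j=1}^n Σ_{k=0}^i g_{k,j}² / w_{k,j}² ≤ n log(1 + (1/ς) Σ_{k=0}^i ‖g_k‖²). -/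
lemma aux_step {x y : ℝ} (hy : 0 < y) (hxy : y ≤ x) :
    (x - y) / x ≤ Real.log x - Real.log y := by
  have hx : 0 < x := hy.trans_le hxy
  have h := Real.log_le_sub_one_of_pos (div_pos hy hx)
  rw [Real.log_div hy.ne' hx.ne'] at h
  have : (x - y) / x = 1 - y / x := by field_simp
  linarith

lemma aux_log_sum (a : ℕ → ℝ) (ha : ∀ k, 0 ≤ a k) (ξ : ℝ) (hξ : 0 < ξ) (i : ℕ) :
    ∑ k ∈ Finset.range (i + 1), a k / (ξ + ∑ t ∈ Finset.range (k + 1), a t)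
      ≤ Real.log (ξ + ∑ k ∈ Finset.range (i + 1), a k) - Real.log ξ := by
  induction i with
  | zero =>
      have := aux_step (x := ξ + a 0) (y := ξ) hξ (by linarith [ha 0])
      simpa using this
  | succ m ih =>
      rw [Finset.sum_range_succ]
      have hS : (0:ℝ) ≤ ∑ t ∈ Finset.range (m + 1), a t :=
        Finset.sum_nonneg fun t _ => ha t
      have hS2 : ∑ t ∈ Finset.range (m + 2), a t
          = (∑ t ∈ Finset.range (m + 1), a t) + a (m + 1) := Finset.sum_range_succ a (m+1)
      have hstep := aux_step (x := ξ + ∑ t ∈ Finset.range (m + 2), a t)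
        (y := ξ + ∑ t ∈ Finset.range (m + 1), a t)
        (by linarith) (by rw [hS2]; linarith [ha (m+1)])
      have hx : (ξ + ∑ t ∈ Finset.range (m + 2), a t)
          - (ξ + ∑ t ∈ Finset.range (m + 1), a t) = a (m + 1) := by rw [hS2]; ring
      rw [hx] at hstep
      linarith

theorem stmt_12 {n : ℕ} (g : ℕ → Fin n → ℝ) (ς : ℝ) (hς : 0 < ς)
    (w : ℕ → Fin n → ℝ)
    (hw : ∀ k j, w k j = (ς + ∑ t ∈ Finset.range (k + 1), (g t j) ^ 2) ^ (1 / 2 : ℝ))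
    (i : ℕ) :
    ∑ j, ∑ k ∈ Finset.range (i + 1), (g k j) ^ 2 / (w k j) ^ 2 ≤
      (n : ℝ) * Real.log (1 + (1 / ς) * ∑ k ∈ Finset.range (i + 1), ∑ j, (g k j) ^ 2) := by
  set T : ℝ := ∑ k ∈ Finset.range (i + 1), ∑ j, (g k j) ^ 2 with hT
  have hTnn : 0 ≤ T :=
    Finset.sum_nonneg fun k _ => Finset.sum_nonneg fun j _ => sq_nonneg _
  have hw2 : ∀ k j, (w k j) ^ 2 = ς + ∑ t ∈ Finset.range (k + 1), (g t j) ^ 2 := by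
    intro k j
    have hpos : 0 ≤ ς + ∑ t ∈ Finset.range (k + 1), (g t j) ^ 2 := by
      have : (0:ℝ) ≤ ∑ t ∈ Finset.range (k + 1), (g t j) ^ 2 :=
        Finset.sum_nonneg fun t _ => sq_nonneg _
      linarith
    rw [hw, ← Real.rpow_natCast _ 2, ← Real.rpow_mul hpos]
    norm_num
  have hlog : Real.log (1 + (1 / ς) * T) = Real.log (ς + T) - Real.log ς := by
    rw [← Real.log_div (by positivity) hς.ne']
    congr 1
    field_simp
  rw [hlog]
  calc ∑ j, ∑ k ∈ Finset.range (i + 1), (g k j) ^ 2 / (w k j) ^ 2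
      ≤ ∑ j : Fin n, (Real.log (ς + T) - Real.log ς) := by
        apply Finset.sum_le_sum
        intro j _
        have h1 : ∑ k ∈ Finset.range (i + 1), (g k j) ^ 2 / (w k j) ^ 2
            ≤ Real.log (ς + ∑ k ∈ Finset.range (i + 1), (g k j) ^ 2) - Real.log ς := by
          have := aux_log_sum (fun k => (g k j) ^ 2) (fun k => sq_nonneg _) ς hς i
          simpa [hw2] using this
        have h2 : ∑ k ∈ Finset.range (i + 1), (g k j) ^ 2 ≤ T := by
          rw [hT]
          apply Finset.sum_le_sum
          intro k _
          exact Finset.single_le_sum (fun j' _ => sq_nonneg (g k j')) (Finset.mem_univ j)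
        have h3 : Real.log (ς + ∑ k ∈ Finset.range (i + 1), (g k j) ^ 2)
            ≤ Real.log (ς + T) := by
          apply Real.log_le_log (by positivity)
          linarith
        linarith
    _ = (n : ℝ) * (Real.log (ς + T) - Real.log ς) := by
        rw [Finset.sum_const, Finset.card_univ, Fintype.card_fin, nsmul_eq_mul]
end

section
/- For all x > 0, |W₋₁(−e^{−x−1})| ≤ 1 + √(2x) + x, where W₋₁ is the lower branch of the Lambert W function. -/
theorem stmt_14 (W : ℝ → ℝ)
    (hW : ∀ z ∈ Set.Ico (-(Real.exp 1)⁻¹) (0 : ℝ),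
      W z ≤ -1 ∧ W z * Real.exp (W z) = z)
    (x : ℝ) (hx : 0 < x) :
    |W (-Real.exp (-x - 1))| ≤ 1 + Real.sqrt (2 * x) + x := by
  have hmem : -Real.exp (-x - 1) ∈ Set.Ico (-(Real.exp 1)⁻¹) (0 : ℝ) := by
    constructor
    · have h : Real.exp (-x - 1) ≤ Real.exp (-1) := by
        apply Real.exp_le_exp.mpr; linarith
      rw [Real.exp_neg] at h
      linarith
    · simpa using Real.exp_pos (-x - 1)
  obtain ⟨h1, h2⟩ := hW _ hmem
  set w := W (-Real.exp (-x - 1)) with hw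
  set u : ℝ := -w with hu
  have hu1 : 1 ≤ u := by simp only [hu]; linarith
  have hupos : 0 < u := by linarith
  have heq : u * Real.exp (-u) = Real.exp (-x - 1) := by
    have h3 : -u = w := by simp [hu]
    rw [h3]
    have h4 : u * Real.exp w = -(w * Real.exp w) := by rw [hu]; ring
    rw [h4, h2, neg_neg]
  have hlog : Real.log u = u - x - 1 := by
    have := congrArg Real.log heq
    rw [Real.log_mul (ne_of_gt hupos) (ne_of_gt (Real.exp_pos _)),
      Real.log_exp, Real.log_exp] at this
    linarith
  set s : ℝ := Real.sqrt (2 * x) with hs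
  have hs0 : 0 ≤ s := Real.sqrt_nonneg _
  have hs2 : s ^ 2 = 2 * x := Real.sq_sqrt (by linarith)
  have hv : 1 + s + x ≤ Real.exp s := by
    have := Real.quadratic_le_exp_of_nonneg hs0
    nlinarith
  have hvpos : 0 < 1 + s + x := by linarith
  have hlnv : Real.log (1 + s + x) ≤ s :=
    (Real.log_le_iff_le_exp hvpos).mpr hv
  have habs : |w| = u := by
    rw [abs_of_neg (by linarith : w < 0)]
  rw [habs]
  by_contra hc
  push_neg at hc
  set v : ℝ := 1 + s + x with hvdef
  have huv : 0 < u / v := div_pos hupos hvpos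
  have hne : u / v ≠ 1 := by
    intro h
    have : u = v := by field_simp at h; linarith
    linarith
  have hlt : Real.log (u / v) < u / v - 1 := Real.log_lt_sub_one_of_pos huv hne
  rw [Real.log_div (ne_of_gt hupos) (ne_of_gt hvpos)] at hlt
  have hdle : (u - v) / v ≤ u - v := div_le_self (by linarith) (by linarith)
  have : u / v - 1 = (u - v) / v := by field_simp
  rw [this] at hlt
  linarith
end
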